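/- arXiv:2008.02587 — 3 statements merged into one kernel-verified Lean document; each statement's English description precedes it below -/
import Mathlib

section
/- Let K be a division ring, k a field contained in the center of K (so that K is a k-algebra with central structure map), and L/k an algebraic Galois field extension such that the k-algebra M = K ⊗_k L is a division ring. Then the map Ψ which sends each σ ∈ Gal(L/k) to the ring automorphism of M determined on pure tensors by h ⊗ x ↦ h ⊗ σ(x) is a group isomorphism from Gal(L/k) onto the group of ring automorphisms of M that fix the subring K ⊗ 1 pointwise. -/
/-!
An automorphism `η` of `K ⊗[k] L` fixing `K ⊗ 1` is `k`-linear and preserves the centre, which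
contains `1 ⊗ L`. The centre is a commutative domain, so `η (1 ⊗ x)` is a root there of the
minimal polynomial of `x`; as this polynomial splits in `L`, all its roots in the centre lie in
`1 ⊗ L`. Hence `η` restricts to a `k`-embedding `σ : L → L`, which is onto because `L/k` is
algebraic, and `η = id ⊗ σ` since `K ⊗ 1` and `1 ⊗ L` generate `K ⊗[k] L`.
-/

open scoped TensorProduct
open Polynomial

theorem isDomain_of_forall_ne_zero_isUnit {R : Type*} [Ring R] [Nontrivial R]
    (h : ∀ x : R, x ≠ 0 → IsUnit x) : IsDomain R :=
  have : NoZeroDivisors R :=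
    ⟨fun {a _} hab => or_iff_not_imp_left.2 fun ha => (h a ha).mul_right_eq_zero.1 hab⟩
  NoZeroDivisors.to_isDomain R

section Normal

variable {k L R : Type*} [Field k] [Field L] [Algebra k L] [Normal k L]
  [CommRing R] [IsDomain R] [Algebra k R]

theorem AlgHom.range_le_range_of_normal (φ ψ : L →ₐ[k] R) : ψ.range ≤ φ.range := by
  rintro _ ⟨x, rfl⟩
  have hx : IsIntegral k x := Algebra.IsIntegral.isIntegral x
  have hne : (minpoly k x).map (algebraMap k R) ≠ 0 := map_monic_ne_zero (minpoly.monic hx)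
  have hroot : ψ x ∈ (minpoly k x).rootSet R :=
    mem_rootSet.2 ⟨minpoly.ne_zero hx, by rw [aeval_algHom_apply, minpoly.aeval, map_zero]⟩
  rw [← (Normal.splits' x).image_rootSet_of_map_ne_zero φ hne] at hroot
  obtain ⟨a, -, ha⟩ := hroot
  exact ⟨a, ha⟩

theorem AlgHom.exists_comp_eq_of_normal (φ ψ : L →ₐ[k] R) :
    ∃ σ : L →ₐ[k] L, φ.comp σ = ψ := by
  let e := AlgEquiv.ofInjective φ φ.toRingHom.injective
  refine ⟨e.symm.toAlgHom.comp (ψ.codRestrict φ.range fun x => range_le_range_of_normal φ ψ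
    ⟨x, rfl⟩), AlgHom.ext fun x => congrArg Subtype.val (e.apply_symm_apply _)⟩

end Normal

namespace Algebra.TensorProduct

section Aut

variable {R A B : Type*} [CommSemiring R] [Semiring A] [Algebra R A] [Semiring B] [Algebra R B]

variable (A) in
def lTensorRingAut : (B ≃ₐ[R] B) →* RingAut (A ⊗[R] B) where
  toFun σ := (congr (AlgEquiv.refl : A ≃ₐ[R] A) σ).toRingEquiv
  map_one' := congrArg AlgEquiv.toRingEquiv congr_refl
  map_mul' σ τ := congrArg AlgEquiv.toRingEquiv (congr_trans .refl .refl τ σ)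

@[simp]
theorem lTensorRingAut_tmul (σ : B ≃ₐ[R] B) (a : A) (b : B) :
    lTensorRingAut A σ (a ⊗ₜ b) = a ⊗ₜ σ b :=
  rfl

theorem lTensorRingAut_injective (h : Function.Injective (includeRight : B →ₐ[R] A ⊗[R] B)) :
    Function.Injective (lTensorRingAut (R := R) (B := B) A) := fun σ τ hστ =>
  AlgEquiv.ext fun b => h (by simpa using RingEquiv.congr_fun hστ (1 ⊗ₜ b))

theorem eq_lTensorRingAut_of_apply_tmul {η : RingAut (A ⊗[R] B)} {σ : B ≃ₐ[R] B}
    (hA : ∀ a, η (a ⊗ₜ 1) = a ⊗ₜ 1) (hB : ∀ b, η (1 ⊗ₜ b) = 1 ⊗ₜ σ b) :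
    η = lTensorRingAut A σ := by
  ext x
  induction x using TensorProduct.induction_on with
  | zero => simp
  | tmul a b =>
    rw [← mul_one a, ← one_mul b, ← tmul_mul_tmul, map_mul, hA, hB]
    simp
  | add x y hx hy => rw [map_add, map_add, hx, hy]

end Aut

variable {k K L : Type*} [Field k] [Ring K] [Algebra k K] [Field L] [Algebra k L] [Normal k L]
  [IsDomain (K ⊗[k] L)]

theorem exists_algHom_apply_one_tmul_of_apply_tmul_one (η : RingAut (K ⊗[k] L))
    (hη : ∀ h : K, η (h ⊗ₜ 1) = h ⊗ₜ 1) :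
    ∃ σ : L →ₐ[k] L, ∀ x, η (1 ⊗ₜ x) = 1 ⊗ₜ σ x := by
  let ηₐ : K ⊗[k] L ≃ₐ[k] K ⊗[k] L := AlgEquiv.ofRingEquiv (f := η) fun c => by
    rw [algebraMap_apply, hη]
  let Z := Subalgebra.center k (K ⊗[k] L)
  have hZ (x : L) : (1 : K) ⊗ₜ[k] x ∈ Z :=
    includeRight_map_center_le k K L ⟨x, Subalgebra.mem_center_iff.2 fun y => mul_comm y x, rfl⟩
  obtain ⟨σ, hσ⟩ := AlgHom.exists_comp_eq_of_normal (includeRight.codRestrict Z hZ)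
    ((ηₐ.toAlgHom.comp includeRight).codRestrict Z fun x =>
      MulEquivClass.apply_mem_center η (hZ x))
  exact ⟨σ, fun x => (congrArg Subtype.val (AlgHom.congr_fun hσ x)).symm⟩

end Algebra.TensorProduct

theorem stmt0_general (K : Type*) [DivisionRing K] (k : Type*) [Field k] [Algebra k K]
    (L : Type*) [Field L] [Algebra k L] [IsGalois k L]
    (hM : ∀ x : K ⊗[k] L, x ≠ 0 → IsUnit x) :
    ∃ Ψ : (L ≃ₐ[k] L) →* RingAut (K ⊗[k] L),
      (∀ (σ : L ≃ₐ[k] L) (h : K) (x : L), Ψ σ (h ⊗ₜ[k] x) = h ⊗ₜ[k] σ x) ∧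
      Function.Injective Ψ ∧
      (∀ η : RingAut (K ⊗[k] L),
        η ∈ Set.range Ψ ↔ ∀ h : K, η (h ⊗ₜ[k] (1 : L)) = h ⊗ₜ[k] (1 : L)) := by
  have := isDomain_of_forall_ne_zero_isUnit hM
  open Algebra.TensorProduct in
  refine ⟨lTensorRingAut K, fun _ _ _ => rfl,
    lTensorRingAut_injective (includeRight_injective (algebraMap k K).injective),
    fun η => ⟨?_, ?_⟩⟩
  · rintro ⟨σ, rfl⟩ h
    simp
  · intro hη
    obtain ⟨σ, hσ⟩ :=
      Algebra.TensorProduct.exists_algHom_apply_one_tmul_of_apply_tmul_one η hη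
    exact ⟨.ofBijective σ (Algebra.IsAlgebraic.algHom_bijective σ),
      (Algebra.TensorProduct.eq_lTensorRingAut_of_apply_tmul hη hσ).symm⟩

/-- Let `K` be a division ring, `k` a field contained in the center of `K`
(so that `K` is a `k`-algebra), and `L/k` an algebraic Galois field extension such that the
`k`-algebra `M = K ⊗[k] L` is a division ring.  Then the map `Ψ` sending `σ ∈ Gal(L/k)` to the
ring automorphism of `M` determined on pure tensors by `h ⊗ x ↦ h ⊗ σ x` is a group isomorphism
from `Gal(L/k)` onto the group of ring automorphisms of `M` fixing `K ⊗ 1` pointwise: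
`Ψ` is an injective group homomorphism whose range is exactly the set of automorphisms of `M`
fixing `K ⊗ 1` pointwise. -/
theorem stmt0 (K : Type*) [DivisionRing K] (k : Type*) [Field k] [Algebra k K]
    (L : Type*) [Field L] [Algebra k L] [IsGalois k L] [Algebra.IsAlgebraic k L]
    (hM : ∀ x : K ⊗[k] L, x ≠ 0 → IsUnit x) :
    ∃ Ψ : (L ≃ₐ[k] L) →* RingAut (K ⊗[k] L),
      (∀ (σ : L ≃ₐ[k] L) (h : K) (x : L), Ψ σ (h ⊗ₜ[k] x) = h ⊗ₜ[k] σ x) ∧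
      Function.Injective Ψ ∧
      (∀ η : RingAut (K ⊗[k] L),
        η ∈ Set.range Ψ ↔ ∀ h : K, η (h ⊗ₜ[k] (1 : L)) = h ⊗ₜ[k] (1 : L)) :=
  stmt0_general K k L hM
end

section
/- Let K be a division ring, k a field contained in the center of K, and L/k an algebraic Galois field extension such that M = K ⊗_k L is a division ring. Then every ring automorphism η of M fixing K ⊗ 1 pointwise satisfies η(1 ⊗ L) = 1 ⊗ L, and the map σ_η : L → L defined by η(1 ⊗ l) = 1 ⊗ σ_η(l) is a k-algebra automorphism of L, i.e., an element of Gal(L/k). -/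
/-!
Since `1 ⊗ l` is central in `M` and `η` is a `k`-algebra automorphism, `η (1 ⊗ l)` is central and
is a root of the minimal polynomial `p` of `l` over `k`. As `L/k` is normal, `p` splits over `L`
into factors `X - a`, and the centrality lets us evaluate this factorization at `η (1 ⊗ l)`: the
product of the elements `η (1 ⊗ l) - 1 ⊗ a` vanishes in the division ring `M`, so
`η (1 ⊗ l) = 1 ⊗ a` for some root `a`. The resulting `k`-embedding `L → L` is an automorphism
because `L/k` is algebraic.
-/

open scoped TensorProduct
open Polynomial

theorem noZeroDivisors_of_isUnit {R : Type*} [MonoidWithZero R]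
    (h : ∀ x : R, x ≠ 0 → IsUnit x) : NoZeroDivisors R :=
  ⟨fun {a _} hab => or_iff_not_imp_left.2 fun ha => (h a ha).mul_right_eq_zero.1 hab⟩

theorem Algebra.TensorProduct.commute_one_tmul {R A B : Type*} [CommSemiring R] [Semiring A]
    [Algebra R A] [CommSemiring B] [Algebra R B] (b : B) (m : A ⊗[R] B) :
    Commute ((1 : A) ⊗ₜ[R] b) m := by
  induction m using TensorProduct.induction_on with
  | zero => exact Commute.zero_right _
  | tmul a b' => exact (Commute.one_left a).tmul (Commute.all b b')
  | add m₁ m₂ h₁ h₂ => exact h₁.add_right h₂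

theorem Polynomial.Splits.exists_eq_of_eval₂_eq_zero {L M : Type*} [Field L] [Ring M]
    [NoZeroDivisors M] [Nontrivial M] (f : L →+* M) {x : M} (hx : ∀ a, Commute (f a) x)
    {q : L[X]} (hq : q.Splits) (hmonic : q.Monic) (h : q.eval₂ f x = 0) :
    ∃ a ∈ q.roots, f a = x := by
  have hprod : q = (q.roots.toList.map fun a => X - C a).prod := by
    conv_lhs => rw [hq.eq_prod_roots_of_monic hmonic, ← Multiset.coe_toList q.roots,
      Multiset.map_coe, Multiset.prod_coe]
  have hzero : (q.roots.toList.map fun a => x - f a).prod = 0 := by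
    have h' : eval₂RingHom' f x hx q = 0 := h
    rw [hprod, map_list_prod, List.map_map] at h'
    simpa [Function.comp_def] using h'
  obtain ⟨a, ha, hax⟩ := List.mem_map.1 (List.prod_eq_zero_iff.1 hzero)
  exact ⟨a, Multiset.mem_toList.1 ha, (sub_eq_zero.1 hax).symm⟩

theorem AlgHom.exists_apply_eq_of_aeval_minpoly_eq_zero {k L M : Type*} [Field k] [Field L]
    [Algebra k L] [Normal k L] [Ring M] [Algebra k M] [NoZeroDivisors M] [Nontrivial M]
    (f : L →ₐ[k] M) {x : M} (hx : ∀ a, Commute (f a) x) (l : L)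
    (h : aeval x (minpoly k l) = 0) : ∃ a, f a = x := by
  obtain ⟨a, -, ha⟩ := (Normal.splits ‹Normal k L› l).exists_eq_of_eval₂_eq_zero (f : L →+* M) hx
    ((minpoly.monic (Normal.isIntegral ‹Normal k L› l)).map _)
    (by rwa [eval₂_map, AlgHom.comp_algebraMap, ← aeval_def])
  exact ⟨a, ha⟩

theorem exists_algEquiv_of_apply_mem_range {k L M : Type*} [Field k] [Field L] [Algebra k L]
    [Algebra.IsAlgebraic k L] [Ring M] [Algebra k M] {ι : L →ₐ[k] M}
    (hι : Function.Injective ι) (φ : M ≃ₐ[k] M) (hφ : ∀ l, ∃ a, ι a = φ (ι l)) :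
    ∃ σ : L ≃ₐ[k] L, ∀ l, φ (ι l) = ι (σ l) := by
  let σ : L →ₐ[k] L := (AlgEquiv.ofInjective ι hι).symm.toAlgHom.comp
    ((φ.toAlgHom.comp ι).codRestrict ι.range fun l => hφ l)
  refine ⟨AlgEquiv.ofBijective σ (Algebra.IsAlgebraic.algHom_bijective σ), fun l => ?_⟩
  have hσl := AlgEquiv.apply_symm_apply (AlgEquiv.ofInjective ι hι)
    ((φ.toAlgHom.comp ι).codRestrict ι.range (fun l => hφ l) l)
  exact (congrArg Subtype.val hσl).symm

theorem stmt1_general (K : Type*) [DivisionRing K] (k : Type*) [Field k] [Algebra k K]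
    (L : Type*) [Field L] [Algebra k L] [IsGalois k L]
    (hM : ∀ x : K ⊗[k] L, x ≠ 0 → IsUnit x)
    (η : RingAut (K ⊗[k] L))
    (hη : ∀ h : K, η (h ⊗ₜ[k] (1 : L)) = h ⊗ₜ[k] (1 : L)) :
    (η '' {m : K ⊗[k] L | ∃ l : L, m = (1 : K) ⊗ₜ[k] l}
        = {m : K ⊗[k] L | ∃ l : L, m = (1 : K) ⊗ₜ[k] l}) ∧
    ∃ σ : L ≃ₐ[k] L, ∀ l : L, η ((1 : K) ⊗ₜ[k] l) = (1 : K) ⊗ₜ[k] σ l := by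
  let ι : L →ₐ[k] K ⊗[k] L := Algebra.TensorProduct.includeRight
  have hι : Function.Injective ι :=
    Algebra.TensorProduct.includeRight_injective (algebraMap k K).injective
  have := hι.nontrivial
  have := noZeroDivisors_of_isUnit hM
  let φ : (K ⊗[k] L) ≃ₐ[k] (K ⊗[k] L) :=
    AlgEquiv.ofRingEquiv (f := η) fun c => by rw [Algebra.TensorProduct.algebraMap_apply, hη]
  have hcentral : ∀ l a, Commute (ι a) (φ (ι l)) := fun l a => by
    have hcomm := (Algebra.TensorProduct.commute_one_tmul l (φ.symm (ι a))).symm.map φ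
    rwa [φ.apply_symm_apply] at hcomm
  have hroot : ∀ l, aeval (φ (ι l)) (minpoly k l) = 0 := fun l => by
    rw [show φ (ι l) = (φ.toAlgHom.comp ι) l from rfl, aeval_algHom_apply, minpoly.aeval,
      map_zero]
  obtain ⟨σ, hσ⟩ := exists_algEquiv_of_apply_mem_range hι φ fun l =>
    ι.exists_apply_eq_of_aeval_minpoly_eq_zero (hcentral l) l (hroot l)
  refine ⟨Set.ext fun m => ⟨?_, ?_⟩, σ, hσ⟩
  · rintro ⟨_, ⟨l, rfl⟩, rfl⟩
    exact ⟨σ l, hσ l⟩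
  · rintro ⟨l, rfl⟩
    exact ⟨_, ⟨σ.symm l, rfl⟩, (hσ _).trans (by rw [σ.apply_symm_apply]; rfl)⟩

/-- Let `K` be a division ring, `k` a field contained in the center of `K`,
and `L/k` an algebraic Galois field extension such that `M = K ⊗[k] L` is a division ring.
Then every ring automorphism `η` of `M` fixing `K ⊗ 1` pointwise satisfies
`η(1 ⊗ L) = 1 ⊗ L`, and the induced map `σ_η : L → L`, defined by
`η (1 ⊗ l) = 1 ⊗ σ_η l`, is a `k`-algebra automorphism of `L`, i.e. an element of
`Gal(L/k)`. -/
theorem stmt1 (K : Type*) [DivisionRing K] (k : Type*) [Field k] [Algebra k K]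
    (L : Type*) [Field L] [Algebra k L] [IsGalois k L] [Algebra.IsAlgebraic k L]
    (hM : ∀ x : K ⊗[k] L, x ≠ 0 → IsUnit x)
    (η : RingAut (K ⊗[k] L))
    (hη : ∀ h : K, η (h ⊗ₜ[k] (1 : L)) = h ⊗ₜ[k] (1 : L)) :
    (η '' {m : K ⊗[k] L | ∃ l : L, m = (1 : K) ⊗ₜ[k] l}
        = {m : K ⊗[k] L | ∃ l : L, m = (1 : K) ⊗ₜ[k] l}) ∧
    ∃ σ : L ≃ₐ[k] L, ∀ l : L, η ((1 : K) ⊗ₜ[k] l) = (1 : K) ⊗ₜ[k] σ l :=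
  stmt1_general K k L hM η hη
end

section
/- Let K be a division ring, k a field contained in the center of K, and L/k an algebraic Galois field extension such that M = K ⊗_k L is a division ring. Then the extension M/K is Galois in the sense of skew fields: every element of M that is fixed by all ring automorphisms of M fixing K ⊗ 1 pointwise belongs to K ⊗ 1. -/
/-!
For `σ ∈ Gal(L/k)` the map `id ⊗ σ` is a ring automorphism of `K ⊗[k] L` fixing `K ⊗ 1`, so `m`
is fixed by all of them. Writing `m = ∑ bᵢ ⊗ lᵢ` in a `k`-basis `b` of `K`, every coefficient `lᵢ`
is then `Gal(L/k)`-invariant, hence lies in `k` by (infinite) Galois theory, and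
`m = (∑ lᵢ • bᵢ) ⊗ 1`.
-/

open TensorProduct

lemma TensorProduct.equivFinsuppOfBasisLeft_lTensor_apply {R M N N' ι : Type*} [CommSemiring R]
    [AddCommMonoid M] [Module R M] [AddCommMonoid N] [Module R N] [AddCommMonoid N'] [Module R N']
    [DecidableEq ι] (b : Module.Basis ι R M) (f : N →ₗ[R] N') (x : M ⊗[R] N) (i : ι) :
    equivFinsuppOfBasisLeft b (f.lTensor M x) i = f (equivFinsuppOfBasisLeft b x i) := by
  induction x <;> simp_all

theorem TensorProduct.exists_tmul_one_eq_of_forall_lTensor_eq {k L V : Type*} [Field k] [Field L]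
    [Algebra k L] [IsGalois k L] [AddCommGroup V] [Module k V] {x : V ⊗[k] L}
    (hx : ∀ σ : L ≃ₐ[k] L, σ.toLinearMap.lTensor V x = x) : ∃ v : V, v ⊗ₜ 1 = x := by
  classical
  let b := Module.Basis.ofVectorSpace k V
  set e := equivFinsuppOfBasisLeft (N := L) b
  have hcoeff (i) : e x i ∈ Set.range (algebraMap k L) :=
    (InfiniteGalois.mem_range_algebraMap_iff_fixed _).2 fun σ ↦ by
      simpa [e] using (equivFinsuppOfBasisLeft_lTensor_apply b σ.toLinearMap x i).symm.trans
        (congrArg (e · i) (hx σ))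
  choose c hc using hcoeff
  refine ⟨(e x).sum fun i _ ↦ c i • b i, ?_⟩
  calc ((e x).sum fun i _ ↦ c i • b i) ⊗ₜ (1 : L)
      = (e x).sum fun i n ↦ b i ⊗ₜ n := by
        simp only [Finsupp.sum, sum_tmul, smul_tmul, ← Algebra.algebraMap_eq_smul_one, hc]
    _ = x := by rw [← equivFinsuppOfBasisLeft_symm_apply, LinearEquiv.symm_apply_apply]

theorem stmt2_general (K : Type*) [DivisionRing K] (k : Type*) [Field k] [Algebra k K]
    (L : Type*) [Field L] [Algebra k L] [IsGalois k L]
    (m : K ⊗[k] L)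
    (hm : ∀ η : RingAut (K ⊗[k] L),
      (∀ h : K, η (h ⊗ₜ[k] (1 : L)) = h ⊗ₜ[k] (1 : L)) → η m = m) :
    ∃ h : K, m = h ⊗ₜ[k] (1 : L) := by
  obtain ⟨h, hh⟩ := exists_tmul_one_eq_of_forall_lTensor_eq (V := K) (x := m) fun σ ↦
    hm (Algebra.TensorProduct.congr AlgEquiv.refl σ).toRingEquiv (by simp)
  exact ⟨h, hh.symm⟩

/-- Let `K` be a division ring, `k` a field contained in the center of `K`,
and `L/k` an algebraic Galois field extension such that `M = K ⊗[k] L` is a division ring.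
Then the extension `M/K` is Galois in the sense of skew fields: every element of `M` fixed by
all ring automorphisms of `M` fixing `K ⊗ 1` pointwise belongs to `K ⊗ 1`. -/
theorem stmt2 (K : Type*) [DivisionRing K] (k : Type*) [Field k] [Algebra k K]
    (L : Type*) [Field L] [Algebra k L] [IsGalois k L] [Algebra.IsAlgebraic k L]
    (hM : ∀ x : K ⊗[k] L, x ≠ 0 → IsUnit x)
    (m : K ⊗[k] L)
    (hm : ∀ η : RingAut (K ⊗[k] L),
      (∀ h : K, η (h ⊗ₜ[k] (1 : L)) = h ⊗ₜ[k] (1 : L)) → η m = m) :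
    ∃ h : K, m = h ⊗ₜ[k] (1 : L) :=
  stmt2_general K k L m hm
end
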